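/- arXiv:2503.02088 — 2 statements merged into one kernel-verified Lean document; each statement's English description precedes it below -/
import Mathlib

section
/- For every k ≥ 4 and corresponding n, no online algorithm is better than 2/(√k − 2)-MMS-competitive in the adversarial arrival model, even with binary valuations: for the constructed instance, any irrevocable allocation to the first agent of value more than (2/(√k−2))·μ₁ forces two valued items of some unit-MMS type to be consumed, after which that type's n−1 remaining agents cannot all receive positive value. -/
open Finset

/-- The `r`-th interval of `n` consecutive items (0-indexed). -/
def interval (n r : ℕ) : Finset ℕ := Finset.Ico (r * n) ((r + 1) * n)

/-- The first (`a = true`) or second (`a = false`) half of the `r`-th interval. -/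
def halfI (n r : ℕ) (a : Bool) : Finset ℕ :=
  if a then Finset.Ico (r * n) (r * n + n / 2)
  else Finset.Ico (r * n + n / 2) ((r + 1) * n)

/-- The binary valuation of the pair-type `i^{(a,b)}_{l,r}`. -/
noncomputable def valP (n l r : ℕ) (a b : Bool) (g : ℕ) : ℝ :=
  if g ∈ halfI n l a ∪ halfI n r b then 1 else 0

/-- The binary valuation of the interval-type `i_r`. -/
noncomputable def valT (n r : ℕ) (g : ℕ) : ℝ :=
  if g ∈ interval n r then 1 else 0

lemma halfI_subset (n r : ℕ) (a : Bool) : halfI n r a ⊆ interval n r := by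
  intro g hg
  cases a <;>
    simp only [halfI, interval, Finset.mem_Ico, Nat.succ_mul, if_true, if_false,
      Bool.false_eq_true, ite_false, ite_true] at * <;> omega

lemma halfI_card (n r : ℕ) (hn : n % 2 = 0) (a : Bool) : (halfI n r a).card = n / 2 := by
  cases a <;>
    simp only [halfI, if_true, if_false, Bool.false_eq_true, ite_false, ite_true,
      Nat.card_Ico, Nat.succ_mul] <;> omega

lemma pigeonhole_zero (v : ℕ → ℝ) (hv : ∀ g, v g = 0 ∨ v g = 1) (S : Finset ℕ)
    (m : ℕ) (hcard : (S.filter (fun g => v g = 1)).card < m)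
    (f : ℕ → Fin m) :
    ∃ j : Fin m, ∑ g ∈ S.filter (fun g => f g = j), v g = 0 := by
  classical
  set T := S.filter (fun g => v g = 1) with hT
  have hm : 0 < m := lt_of_le_of_lt (Nat.zero_le _) hcard
  have himg : (T.image f).card < m := lt_of_le_of_lt Finset.card_image_le hcard
  have hex : ∃ j : Fin m, j ∉ T.image f := by
    by_contra h
    push_neg at h
    have hsub : (Finset.univ : Finset (Fin m)) ⊆ T.image f := fun j _ => h j
    have := Finset.card_le_card hsub
    rw [Finset.card_univ, Fintype.card_fin] at this
    omega
  obtain ⟨j, hj⟩ := hex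
  refine ⟨j, Finset.sum_eq_zero ?_⟩
  intro g hg
  rw [Finset.mem_filter] at hg
  rcases hv g with h0 | h1
  · exact h0
  · exact absurd (Finset.mem_image.mpr ⟨g, Finset.mem_filter.mpr ⟨hg.1, h1⟩, hg.2⟩) hj

open scoped Classical in
/-- Lower bound in the adversarial model: in the constructed binary instance,
any bundle `b` given irrevocably to the first agent of value (= cardinality)
exceeding `(2/(√k − 2))·μ₁` consumes two valued items of some unit-MMS type
(an interval type or a pair type): that type values exactly `n` items, at most
`n − 2` valued items survive in `M \ b`, and hence in every partition of the
remaining items among the `n − 1` remaining agents of that type some agent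
receives value `0`. -/
theorem stmt8 (k n : ℕ) (hk : 4 ≤ k) (hsq : 2 < Real.sqrt k)
    (hn : Even n) (hn2 : 2 ≤ n)
    (μ₁ : ℕ) (hμ : μ₁ = Nat.sqrt k / 2)
    (M : Finset ℕ) (hM : M = Finset.range (n * μ₁))
    (b : Finset ℕ) (hbM : b ⊆ M)
    (hval : (2 / (Real.sqrt k - 2)) * (μ₁ : ℝ) < (b.card : ℝ)) :
    ∃ v : ℕ → ℝ,
      ((∃ r < μ₁, v = valT n r) ∨
        (∃ l r : ℕ, l < μ₁ ∧ r < μ₁ ∧ l ≠ r ∧ ∃ a c : Bool, v = valP n l r a c)) ∧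
      (M.filter (fun g => v g = 1)).card = n ∧
      ((M \ b).filter (fun g => v g = 1)).card ≤ n - 2 ∧
      ∀ f : ℕ → Fin (n - 1), ∃ j : Fin (n - 1),
        ∑ g ∈ (M \ b).filter (fun g => f g = j), v g = 0 := by
  have hn0 : 0 < n := by omega
  have hnmod : n % 2 = 0 := Nat.even_iff.mp hn
  -- step 1 : b has at least two elements
  have hsqpos : (0 : ℝ) < Real.sqrt k - 2 := by linarith
  have hksqrt : Real.sqrt k < (Nat.sqrt k : ℝ) + 1 := by
    have h0 : k < (Nat.sqrt k + 1) * (Nat.sqrt k + 1) := Nat.lt_succ_sqrt k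
    have h1 : (k : ℝ) < ((Nat.sqrt k : ℝ) + 1) * ((Nat.sqrt k : ℝ) + 1) := by
      exact_mod_cast h0
    have h2 : (0 : ℝ) ≤ (Nat.sqrt k : ℝ) + 1 := by positivity
    nlinarith [Real.sq_sqrt (by positivity : (0:ℝ) ≤ (k:ℝ)),
      Real.sqrt_nonneg (k : ℝ)]
  have hμ1 : 2 * μ₁ + 1 ≥ Nat.sqrt k := by omega
  have hμR : Real.sqrt k - 2 < 2 * (μ₁ : ℝ) := by
    have : (Nat.sqrt k : ℝ) ≤ 2 * (μ₁ : ℝ) + 1 := by exact_mod_cast hμ1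
    linarith
  have hone : (1 : ℝ) < (2 / (Real.sqrt k - 2)) * (μ₁ : ℝ) := by
    rw [div_mul_eq_mul_div, lt_div_iff₀ hsqpos]
    linarith
  have hb2 : 1 < b.card := by exact_mod_cast lt_trans hone hval
  obtain ⟨g₁, hg₁, g₂, hg₂, hgne⟩ := Finset.one_lt_card.mp hb2
  have hg₁M : g₁ ∈ M := hbM hg₁
  have hg₂M : g₂ ∈ M := hbM hg₂
  -- items lie in intervals indexed by g / n
  have hmemI : ∀ g, g ∈ M → g ∈ interval n (g / n) ∧ g / n < μ₁ := by
    intro g hg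
    rw [hM, Finset.mem_range] at hg
    have hd := Nat.div_add_mod g n
    have hm := Nat.mod_lt g hn0
    constructor
    · simp only [interval, Finset.mem_Ico, Nat.succ_mul]
      constructor
      · nlinarith [Nat.div_mul_le_self g n]
      · nlinarith
    · by_contra h
      push_neg at h
      have : μ₁ * n ≤ g / n * n := Nat.mul_le_mul_right n h
      nlinarith [Nat.div_mul_le_self g n]
  obtain ⟨hg₁I, hr₁⟩ := hmemI g₁ hg₁M
  obtain ⟨hg₂I, hr₂⟩ := hmemI g₂ hg₂M
  set r₁ := g₁ / n
  set r₂ := g₂ / n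
  -- intervals are contained in M
  have hIsub : ∀ r, r < μ₁ → interval n r ⊆ M := by
    intro r hr g hg
    rw [hM, Finset.mem_range]
    simp only [interval, Finset.mem_Ico, Nat.succ_mul] at hg
    have : (r + 1) * n ≤ μ₁ * n := Nat.mul_le_mul_right n hr
    rw [Nat.succ_mul] at this
    have : r * n + n ≤ n * μ₁ := by rw [Nat.mul_comm n μ₁]; omega
    omega
  -- generic finish given the valued set equals a set V of card n containing g₁, g₂
  have finish : ∀ v : ℕ → ℝ, (∀ g, v g = 0 ∨ v g = 1) →
      (M.filter (fun g => v g = 1)).card = n →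
      v g₁ = 1 → v g₂ = 1 →
      (M.filter (fun g => v g = 1)).card = n ∧
      ((M \ b).filter (fun g => v g = 1)).card ≤ n - 2 ∧
      ∀ f : ℕ → Fin (n - 1), ∃ j : Fin (n - 1),
        ∑ g ∈ (M \ b).filter (fun g => f g = j), v g = 0 := by
    intro v hv hcard hv₁ hv₂
    have hsub : (M \ b).filter (fun g => v g = 1) ⊆
        (M.filter (fun g => v g = 1)) \ {g₁, g₂} := by
      intro g hg
      rw [Finset.mem_filter, Finset.mem_sdiff] at hg
      rw [Finset.mem_sdiff, Finset.mem_filter]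
      refine ⟨⟨hg.1.1, hg.2⟩, ?_⟩
      simp only [Finset.mem_insert, Finset.mem_singleton]
      rintro (rfl | rfl)
      · exact hg.1.2 hg₁
      · exact hg.1.2 hg₂
    have hpair : ({g₁, g₂} : Finset ℕ) ⊆ M.filter (fun g => v g = 1) := by
      intro g hg
      simp only [Finset.mem_insert, Finset.mem_singleton] at hg
      rcases hg with rfl | rfl
      · exact Finset.mem_filter.mpr ⟨hg₁M, hv₁⟩
      · exact Finset.mem_filter.mpr ⟨hg₂M, hv₂⟩
    have hcard2 : ({g₁, g₂} : Finset ℕ).card = 2 := Finset.card_pair hgne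
    have hle : ((M \ b).filter (fun g => v g = 1)).card ≤ n - 2 := by
      calc ((M \ b).filter (fun g => v g = 1)).card
          ≤ ((M.filter (fun g => v g = 1)) \ {g₁, g₂}).card := Finset.card_le_card hsub
        _ = n - 2 := by rw [Finset.card_sdiff_of_subset hpair, hcard, hcard2]
    refine ⟨hcard, hle, ?_⟩
    intro f
    exact pigeonhole_zero v hv (M \ b) (n - 1) (by omega) f
  by_cases hrr : r₁ = r₂
  · -- same interval: use valT
    refine ⟨valT n r₁, Or.inl ⟨r₁, hr₁, rfl⟩, ?_⟩
    have hvset : M.filter (fun g => valT n r₁ g = 1) = interval n r₁ := by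
      ext g
      rw [Finset.mem_filter]
      constructor
      · rintro ⟨-, hg⟩
        by_contra h
        rw [valT, if_neg h] at hg
        norm_num at hg
      · intro hg
        exact ⟨hIsub r₁ hr₁ hg, by rw [valT, if_pos hg]⟩
    have hcard : (M.filter (fun g => valT n r₁ g = 1)).card = n := by
      rw [hvset]; simp [interval, Nat.succ_mul]
    refine finish _ (fun g => ?_) hcard (by rw [valT, if_pos hg₁I]) ?_
    · unfold valT; split <;> simp
    · rw [valT, if_pos]; rwa [hrr]
  · -- different intervals: use valP with appropriate halves
    have hhalf : ∀ g r, g ∈ interval n r → ∃ a : Bool, g ∈ halfI n r a := by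
      intro g r hg
      simp only [interval, Finset.mem_Ico, Nat.succ_mul] at hg
      by_cases h : g < r * n + n / 2
      · exact ⟨true, by simp only [halfI, if_true]; rw [Finset.mem_Ico]; omega⟩
      · exact ⟨false, by
          simp only [halfI, Bool.false_eq_true, if_false, ite_false]
          rw [Finset.mem_Ico, Nat.succ_mul]; omega⟩
    obtain ⟨a, ha⟩ := hhalf g₁ r₁ hg₁I
    obtain ⟨c, hc⟩ := hhalf g₂ r₂ hg₂I
    refine ⟨valP n r₁ r₂ a c, Or.inr ⟨r₁, r₂, hr₁, hr₂, hrr, a, c, rfl⟩, ?_⟩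
    have hUsub : halfI n r₁ a ∪ halfI n r₂ c ⊆ M := by
      intro g hg
      rcases Finset.mem_union.mp hg with h | h
      · exact hIsub r₁ hr₁ (halfI_subset n r₁ a h)
      · exact hIsub r₂ hr₂ (halfI_subset n r₂ c h)
    have hvset : M.filter (fun g => valP n r₁ r₂ a c g = 1) =
        halfI n r₁ a ∪ halfI n r₂ c := by
      ext g
      rw [Finset.mem_filter]
      constructor
      · rintro ⟨-, hg⟩
        by_contra h
        rw [valP, if_neg h] at hg
        norm_num at hg
      · intro hg
        exact ⟨hUsub hg, by rw [valP, if_pos hg]⟩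
    have hdisj : Disjoint (halfI n r₁ a) (halfI n r₂ c) := by
      have hIdisj : Disjoint (interval n r₁) (interval n r₂) := by
        simp only [interval]
        rw [Finset.disjoint_left]
        intro g hg hg'
        rw [Finset.mem_Ico] at hg hg'
        rcases Nat.lt_or_ge r₁ r₂ with h | h
        · have h2 := Nat.mul_le_mul_right n h
          simp only [Nat.succ_mul] at hg hg' h2
          omega
        · have h' : r₂ < r₁ := lt_of_le_of_ne h (Ne.symm hrr)
          have h2 := Nat.mul_le_mul_right n h'
          simp only [Nat.succ_mul] at hg hg' h2
          omega
      exact hIdisj.mono (halfI_subset n r₁ a) (halfI_subset n r₂ c)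
    have hcard : (M.filter (fun g => valP n r₁ r₂ a c g = 1)).card = n := by
      rw [hvset, Finset.card_union_of_disjoint hdisj,
        halfI_card n r₁ hnmod a, halfI_card n r₂ hnmod c]
      omega
    refine finish _ (fun g => ?_) hcard ?_ ?_
    · unfold valP; split <;> simp
    · rw [valP, if_pos (Finset.mem_union_left _ ha)]
    · rw [valP, if_pos (Finset.mem_union_right _ hc)]
end

section
/- If a set B of items satisfies v_i(B) ≥ (1−δ)·2k·n̂ for an additive valuation v_i with all item values at most 1, where δ ≤ 1/2 and k ≥ 2, then B can be partitioned to contain at least n̂ disjoint bundles each of v_i-value at least k(1−δ); consequently the MMS value of v_i on B over n̂ agents is at least k(1−δ). -/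
open Finset

/-- The maximin share value of an additive valuation `v` on item set `M`
over `n` agents. -/
noncomputable def mms {ι : Type*} (n : ℕ) (v : ι → ℝ) (M : Finset ι) : ℝ :=
  ⨆ f : ι → Fin n, ⨅ j : Fin n, ∑ g ∈ M.filter (fun g => f g = j), v g

lemma extract_bag {ι : Type*} (v : ι → ℝ) (T : ℝ) (hT : 0 ≤ T) :
    ∀ B : Finset ι, (∀ g ∈ B, v g ≤ 1) → T ≤ ∑ g ∈ B, v g →
    ∃ S ⊆ B, T ≤ ∑ g ∈ S, v g ∧ ∑ g ∈ S, v g ≤ T + 1 := by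
  classical
  intro B
  induction B using Finset.strongInduction with
  | _ B ih =>
    intro h1 hsum
    by_cases hle : ∑ g ∈ B, v g ≤ T + 1
    · exact ⟨B, Finset.Subset.refl _, hsum, hle⟩
    · push_neg at hle
      have hBne : B.Nonempty := by
        rcases B.eq_empty_or_nonempty with h | h
        · exfalso; rw [h] at hle; simp at hle; linarith
        · exact h
      obtain ⟨g, hg⟩ := hBne
      have hss : B.erase g ⊂ B := Finset.erase_ssubset hg
      have hsum' : ∑ x ∈ B.erase g, v x = ∑ x ∈ B, v x - v g :=
        Finset.sum_erase_eq_sub hg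
      have hT' : T ≤ ∑ x ∈ B.erase g, v x := by
        have := h1 g hg; rw [hsum']; linarith
      obtain ⟨S, hS, h2, h3⟩ := ih _ hss (fun x hx => h1 x (Finset.mem_of_mem_erase hx)) hT'
      exact ⟨S, hS.trans (Finset.erase_subset _ _), h2, h3⟩

lemma bags_exist {ι : Type*} (v : ι → ℝ) (T : ℝ) (hT : 0 ≤ T) :
    ∀ (n : ℕ) (B : Finset ι), (∀ g ∈ B, v g ≤ 1) → (n : ℝ) * (T + 1) ≤ ∑ g ∈ B, v g →
    ∃ bags : Fin n → Finset ι, (∀ s, bags s ⊆ B) ∧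
      (∀ s s', s ≠ s' → Disjoint (bags s) (bags s')) ∧
      (∀ s, T ≤ ∑ g ∈ bags s, v g) := by
  classical
  intro n
  induction n with
  | zero =>
    intro B _ _
    exact ⟨fun s => s.elim0, fun s => s.elim0, fun s => s.elim0, fun s => s.elim0⟩
  | succ n ih =>
    intro B h1 hsum
    have h0 : (0:ℝ) ≤ (n:ℝ) := Nat.cast_nonneg n
    have hTB : T ≤ ∑ g ∈ B, v g := by push_cast at hsum; nlinarith
    obtain ⟨S, hSB, hS1, hS2⟩ := extract_bag v T hT B h1 hTB
    have hrem : (n:ℝ) * (T+1) ≤ ∑ g ∈ B \ S, v g := by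
      rw [Finset.sum_sdiff_eq_sub hSB]; push_cast at hsum; linarith
    obtain ⟨bags', hb1, hb2, hb3⟩ := ih (B \ S)
      (fun g hg => h1 g (Finset.mem_sdiff.mp hg).1) hrem
    have hdisj : ∀ i, Disjoint S (bags' i) := fun i =>
      (Finset.disjoint_sdiff.mono_right (hb1 i)).symm.symm
    refine ⟨Fin.cons S bags', ?_, ?_, ?_⟩
    · intro s
      refine Fin.cases ?_ ?_ s
      · simpa using hSB
      · intro i; simpa using (hb1 i).trans Finset.sdiff_subset
    · intro s s' hne
      rcases Fin.eq_zero_or_eq_succ s with rfl | ⟨i, rfl⟩ <;>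
        rcases Fin.eq_zero_or_eq_succ s' with rfl | ⟨j, rfl⟩
      · exact absurd rfl hne
      · simpa using Finset.disjoint_sdiff.mono_right (hb1 j)
      · simpa using (Finset.disjoint_sdiff.mono_right (hb1 i)).symm
      · have hij : i ≠ j := fun h => hne (by rw [h])
        simpa using hb2 i j hij
    · intro s
      refine Fin.cases ?_ ?_ s
      · simpa using hS1
      · intro i; simpa using hb3 i

/-- If `v_i(B) ≥ (1−δ)·2k·nhat` with all item values at most `1`, `k ≥ 2` and
`δ ≤ 1/2`, then `B` contains `nhat` pairwise disjoint bundles each of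
`v_i`-value at least `k(1−δ)`; consequently the MMS value of `v_i` on `B` over
`nhat` agents is at least `k(1−δ)`. -/
theorem stmt13 {ι : Type*} (B : Finset ι) (v : ι → ℝ) (hv : ∀ g, 0 ≤ v g)
    (h1 : ∀ g ∈ B, v g ≤ 1)
    (k nhat : ℕ) (hk : 2 ≤ k) (hn : 1 ≤ nhat)
    (δ : ℝ) (hδ0 : 0 ≤ δ) (hδ : δ ≤ 1 / 2)
    (hB : (1 - δ) * (2 * (k : ℝ) * (nhat : ℝ)) ≤ ∑ g ∈ B, v g) :
    (∃ bags : Fin nhat → Finset ι,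
      (∀ s, bags s ⊆ B) ∧
      (∀ s s', s ≠ s' → Disjoint (bags s) (bags s')) ∧
      (∀ s, (k : ℝ) * (1 - δ) ≤ ∑ g ∈ bags s, v g)) ∧
    (k : ℝ) * (1 - δ) ≤ mms nhat v B := by
  have hk2 : (2:ℝ) ≤ (k:ℝ) := by exact_mod_cast hk
  have hn1 : (1:ℝ) ≤ (nhat:ℝ) := by exact_mod_cast hn
  set T : ℝ := (k:ℝ) * (1 - δ) with hTdef
  have hT0 : 0 ≤ T := by nlinarith
  have hT1 : (1:ℝ) ≤ T := by nlinarith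
  have hsum : (nhat : ℝ) * (T + 1) ≤ ∑ g ∈ B, v g := by
    have : (nhat:ℝ) * (T + 1) ≤ (1 - δ) * (2 * (k:ℝ) * (nhat:ℝ)) := by nlinarith
    linarith
  obtain ⟨bags, hb1, hb2, hb3⟩ := bags_exist v T hT0 nhat B h1 hsum
  refine ⟨⟨bags, hb1, hb2, hb3⟩, ?_⟩
  haveI : Nonempty (Fin nhat) := ⟨⟨0, hn⟩⟩
  -- the assignment function
  classical
  set f : ι → Fin nhat := fun g =>
    if h : ∃ s, g ∈ bags s then h.choose else Classical.arbitrary _ with hf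
  have hfiber : ∀ j : Fin nhat, bags j ⊆ B.filter (fun g => f g = j) := by
    intro j g hg
    have hgB : g ∈ B := hb1 j hg
    have hex : ∃ s, g ∈ bags s := ⟨j, hg⟩
    have hchoose : g ∈ bags hex.choose := hex.choose_spec
    have hj : hex.choose = j := by
      by_contra hne
      exact (Finset.disjoint_left.mp (hb2 _ _ hne) hchoose) hg
    refine Finset.mem_filter.mpr ⟨hgB, ?_⟩
    simp only [hf, dif_pos hex]
    exact hj
  have hfilter_le : ∀ (g' : ι → Fin nhat) (j : Fin nhat),
      ∑ x ∈ B.filter (fun g => g' g = j), v x ≤ ∑ g ∈ B, v g := fun g' j =>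
    Finset.sum_le_sum_of_subset_of_nonneg (Finset.filter_subset _ _)
      (fun x hx _ => hv x)
  have hbddB : ∀ g' : ι → Fin nhat,
      BddBelow (Set.range fun j : Fin nhat => ∑ x ∈ B.filter (fun g => g' g = j), v x) :=
    fun g' => Set.Finite.bddBelow (Set.finite_range _)
  have hbddA : BddAbove (Set.range fun g' : ι → Fin nhat =>
      ⨅ j : Fin nhat, ∑ x ∈ B.filter (fun g => g' g = j), v x) := by
    refine ⟨∑ g ∈ B, v g, ?_⟩
    rintro x ⟨g', rfl⟩
    exact le_trans (ciInf_le (hbddB g') (Classical.arbitrary _)) (hfilter_le g' _)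
  have hinf : T ≤ ⨅ j : Fin nhat, ∑ x ∈ B.filter (fun g => f g = j), v x := by
    refine le_ciInf fun j => ?_
    refine le_trans (hb3 j) ?_
    exact Finset.sum_le_sum_of_subset_of_nonneg (hfiber j) (fun x _ _ => hv x)
  exact hinf.trans (le_ciSup hbddA f)
end
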